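/- Let A : ℂ[F] → ℂ[F] be the linear map with A λ_w = |w| λ_w (the generator of the word-length semigroup). Then for all x ∈ ℂ[F]: A(x*)·x + x*·A(x) − A(x*·x) = 2 · Σ_{h ∈ F∖{e}} (L_h x)*·(L_h x), where the sum on the right has only finitely many nonzero terms (only h that are prefixes of words in the support of x contribute). -/

import Mathlib

open scoped Classical

noncomputable section

abbrev F := FreeGroup ℕ
abbrev A := MonoidAlgebra ℂ F

def lam (w : F) : A := MonoidAlgebra.single w 1

def tau (x : A) : ℂ := x.coeff 1

def len (w : F) : ℕ := w.toWord.length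

abbrev Letter := ℕ × Bool

def firstL (w : F) : Option Letter := w.toWord.head?
def lastL (w : F) : Option Letter := w.toWord.getLast?

def invLetter (s : Letter) : Letter := (s.1, !s.2)

/-- `g` is a prefix of `w` : `|g⁻¹w| = |w| - |g|`. -/
def isPrefix (g w : F) : Prop := len g + len (g⁻¹ * w) = len w

/-- the involution `x* (w) = conj (x (w⁻¹))`. -/
def starA (x : A) : A :=
  MonoidAlgebra.ofCoeff (Finsupp.mapDomain (fun w : F => w⁻¹)
    (Finsupp.mapRange (fun c => (starRingEnd ℂ) c) (by simp) x.coeff))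

def Ls (s : Letter) (x : A) : A := MonoidAlgebra.ofCoeff (Finsupp.filter (fun w => firstL w = some s) x.coeff)
def Rs (s : Letter) (x : A) : A := MonoidAlgebra.ofCoeff (Finsupp.filter (fun w => lastL w = some s) x.coeff)

def Lk (k : ℕ) (x : A) : A := Ls (k, true) x + Ls (k, false) x
def Rk (k : ℕ) (x : A) : A := Rs (k, true) x + Rs (k, false) x

def Lh (h : F) (x : A) : A := MonoidAlgebra.ofCoeff (Finsupp.filter (fun w => isPrefix h w) x.coeff)

def Heps (εe : ℂ) (ε : ℕ → ℂ) (x : A) : A :=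
  (εe * tau x) • lam 1 + ∑ᶠ k : ℕ, ε k • Lk k x

def HepsOp (εe : ℂ) (ε : ℕ → ℂ) (x : A) : A :=
  ((starRingEnd ℂ) εe * tau x) • lam 1 + ∑ᶠ k : ℕ, ((starRingEnd ℂ) (ε k)) • Rk k x

/-- noncommutative `L^{2^m}` norm. -/
def Lnorm (m : ℕ) (x : A) : ℝ :=
  (tau ((starA x * x) ^ (2 ^ (m - 1)))).re ^ ((1 : ℝ) / (2 ^ m : ℝ))

/-- `(τ(y^{2^{m-1}}))^{1/2^m}` for positive `y`. -/
def Qnorm (m : ℕ) (y : A) : ℝ :=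
  (tau (y ^ (2 ^ (m - 1)))).re ^ ((1 : ℝ) / (2 ^ m : ℝ))

def ddag (x y : A) : A :=
  Finsupp.sum x.coeff fun g cg => Finsupp.sum y.coeff fun h ch =>
    if ¬ isPrefix g⁻¹ h then (cg * ch) • lam (g * h) else 0

def dag (x y : A) : A :=
  Finsupp.sum x.coeff fun g cg => Finsupp.sum y.coeff fun h ch =>
    if isPrefix g⁻¹ h ∧ g⁻¹ ≠ h then (cg * ch) • lam (g * h) else 0


/-- the generator of the word-length semigroup, `A λ_w = |w| λ_w`. -/
def Agen (x : A) : A := Finsupp.sum x.coeff fun w c => ((len w : ℂ) * c) • lam w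

/-!
Both sides are diagonals of sesquilinear forms in `x`, so it suffices to compare, for each pair
of basis vectors `λ_g, λ_w`, the coefficients of `λ_{g⁻¹w}`. On the left this coefficient is `|g| + |w| - |g⁻¹w|`;
on the right it is twice the number of nontrivial common prefixes of `g` and `w`. They agree
because reducing the word of `g⁻¹w` cancels exactly the longest common prefix of the reduced
words of `g` and `w`, and the nontrivial prefixes of that common prefix are the nontrivial
common prefixes of `g` and `w`.
-/

open FreeGroup Finset

namespace List

variable {α : Type*} [DecidableEq α]

def commonPrefixLength : List α → List α → ℕ
  | [], _ => 0
  | _ :: _, [] => 0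
  | a :: l, b :: m => if a = b then commonPrefixLength l m + 1 else 0

@[simp]
theorem commonPrefixLength_nil_left (m : List α) : commonPrefixLength [] m = 0 := rfl

@[simp]
theorem commonPrefixLength_nil_right (l : List α) : commonPrefixLength l [] = 0 := by
  cases l <;> rfl

theorem commonPrefixLength_cons_cons (a b : α) (l m : List α) :
    commonPrefixLength (a :: l) (b :: m) = if a = b then commonPrefixLength l m + 1 else 0 :=
  rfl

theorem commonPrefixLength_le_length_left : ∀ l m : List α, commonPrefixLength l m ≤ l.length
  | [], _ => by simp
  | _ :: _, [] => by simp
  | a :: l, b :: m => by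
    rw [commonPrefixLength_cons_cons]
    split
    · simpa using commonPrefixLength_le_length_left l m
    · simp

theorem commonPrefixLength_eq_length_iff :
    ∀ {l m : List α}, commonPrefixLength l m = l.length ↔ l <+: m
  | [], _ => by simp
  | _ :: _, [] => by simp
  | a :: l, b :: m => by
    rw [commonPrefixLength_cons_cons, cons_prefix_cons]
    split_ifs with hab
    · simp [hab, commonPrefixLength_eq_length_iff]
    · simp [hab]

theorem prefix_take_commonPrefixLength_iff :
    ∀ {k l m : List α}, k <+: l.take (commonPrefixLength l m) ↔ k <+: l ∧ k <+: m
  | [], _, _ => by simp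
  | _ :: _, [], _ => by simp
  | _ :: _, _ :: _, [] => by simp
  | c :: k, a :: l, b :: m => by
    rw [commonPrefixLength_cons_cons]
    split_ifs with hab
    · subst hab
      simp only [take_succ_cons, cons_prefix_cons, prefix_take_commonPrefixLength_iff]
      tauto
    · simp only [take_zero, prefix_nil, reduceCtorEq, false_iff, cons_prefix_cons, not_and]
      rintro ⟨rfl, -⟩ rfl -
      exact hab rfl

end List

namespace FreeGroup

variable {α : Type*} [DecidableEq α]

theorem IsReduced.invRev {L : List (α × Bool)} (h : IsReduced L) : IsReduced (invRev L) :=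
  isReduced_iff_reduce_eq.2 (by rw [reduce_invRev, h.reduce_eq])

theorem length_reduce_invRev_append : ∀ {L M : List (α × Bool)}, IsReduced L → IsReduced M →
    (reduce (invRev L ++ M)).length + 2 * L.commonPrefixLength M = L.length + M.length
  | [], M, _, hM => by simp [hM.reduce_eq]
  | a :: L, [], hL, _ => by simp [hL.invRev.reduce_eq, invRev_length]
  | a :: L, b :: M, hL, hM => by
    have hinv : invRev (a :: L) = invRev L ++ [(a.1, !a.2)] := by simp [invRev]
    rw [List.commonPrefixLength_cons_cons]
    split_ifs with hab
    · subst hab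
      have hcancel : reduce (invRev (a :: L) ++ a :: M) = reduce (invRev L ++ M) := by
        rw [hinv, List.append_assoc, List.singleton_append]
        exact reduce.Step.eq Red.Step.not_rev
      have := length_reduce_invRev_append (hL.infix (List.suffix_cons a L).isInfix)
        (hM.infix (List.suffix_cons a M).isInfix)
      simp only [hcancel, List.length_cons]
      omega
    · have hred : IsReduced (invRev (a :: L) ++ b :: M) := by
        have hL' := hL.invRev
        rw [hinv] at hL' ⊢
        rw [List.append_assoc, List.singleton_append]
        refine List.isChain_append_cons_cons.2 ⟨hL', fun h1 => ?_, hM⟩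
        revert hab
        obtain ⟨a1, a2⟩ := a
        obtain ⟨b1, b2⟩ := b
        simp only at h1
        subst h1
        cases a2 <;> cases b2 <;> simp
      simp [hred.reduce_eq, invRev_length]

end FreeGroup

theorem len_inv (g : F) : len g⁻¹ = len g := norm_inv_eq

theorem len_add_len_eq_commonPrefixLength (g w : F) :
    len g + len w = len (g⁻¹ * w) + 2 * g.toWord.commonPrefixLength w.toWord := by
  have := length_reduce_invRev_append (isReduced_toWord (x := g)) (isReduced_toWord (x := w))
  simp only [len, toWord_mul, toWord_inv]
  omega

theorem isPrefix_iff_toWord_prefix {h w : F} : isPrefix h w ↔ h.toWord <+: w.toWord := by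
  rw [← List.commonPrefixLength_eq_length_iff, isPrefix]
  have := len_add_len_eq_commonPrefixLength h w
  simp only [len] at this ⊢
  omega

def prefixes (w : F) : Finset F := (range (len w + 1)).image fun k => mk (w.toWord.take k)

theorem toWord_mk_take (w : F) (k : ℕ) : (mk (w.toWord.take k)).toWord = w.toWord.take k := by
  rw [toWord_mk]
  exact (isReduced_toWord.infix (List.take_prefix _ _).isInfix).reduce_eq

theorem mem_prefixes {h w : F} : h ∈ prefixes w ↔ h.toWord <+: w.toWord := by
  simp only [prefixes, mem_image, mem_range]
  constructor
  · rintro ⟨k, -, rfl⟩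
    rw [toWord_mk_take]
    exact List.take_prefix _ _
  · intro hp
    refine ⟨len h, Nat.lt_succ_of_le hp.length_le, ?_⟩
    rw [len, ← List.prefix_iff_eq_take.1 hp, mk_toWord]

theorem card_prefixes (w : F) : #(prefixes w) = len w + 1 := by
  rw [prefixes, card_image_of_injOn, card_range]
  intro k hk l hl hkl
  have := congrArg (fun h : F => h.toWord.length) hkl
  simp only [coe_range, Set.mem_Iio, toWord_mk_take, List.length_take] at hk hl this
  simp only [len] at hk hl
  omega

theorem prefixes_inter_prefixes (g w : F) :
    prefixes g ∩ prefixes w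
      = prefixes (mk (g.toWord.take (g.toWord.commonPrefixLength w.toWord))) := by
  ext h
  simp only [mem_inter, mem_prefixes, toWord_mk_take, List.prefix_take_commonPrefixLength_iff]

def commonPrefixes (g w : F) : Finset F := (prefixes g ∩ prefixes w).erase 1

theorem mem_commonPrefixes {h g w : F} :
    h ∈ commonPrefixes g w ↔ h ≠ 1 ∧ isPrefix h g ∧ isPrefix h w := by
  simp only [commonPrefixes, mem_erase, mem_inter, mem_prefixes, isPrefix_iff_toWord_prefix]

theorem card_commonPrefixes (g w : F) :
    #(commonPrefixes g w) = g.toWord.commonPrefixLength w.toWord := by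
  have hone : (1 : F) ∈ prefixes g ∩ prefixes w := by
    simp [mem_prefixes, toWord_one]
  rw [commonPrefixes, card_erase_of_mem hone, prefixes_inter_prefixes, card_prefixes, len,
    toWord_mk_take, List.length_take]
  have := List.commonPrefixLength_le_length_left g.toWord w.toWord
  omega

theorem len_add_len_eq_card_commonPrefixes (g w : F) :
    len g + len w = len (g⁻¹ * w) + 2 * #(commonPrefixes g w) := by
  rw [card_commonPrefixes, len_add_len_eq_commonPrefixLength]

theorem commonPrefixes_subset {s : Finset F} {g : F} (hg : g ∈ s) (w : F) :
    commonPrefixes g w ⊆ (s.biUnion prefixes).erase 1 := fun h hh => by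
  obtain ⟨h1, hpg, -⟩ := mem_commonPrefixes.1 hh
  exact mem_erase.2 ⟨h1, mem_biUnion.2 ⟨g, hg, mem_prefixes.2 (isPrefix_iff_toWord_prefix.1 hpg)⟩⟩

theorem sum_sum_of_biadditive {M N P ι κ : Type*} [AddCommGroup M] [AddCommGroup N]
    [AddCommGroup P] (f : M → N → P) (hl : ∀ x x' y, f (x + x') y = f x y + f x' y)
    (hr : ∀ x y y', f x (y + y') = f x y + f x y') (s : Finset ι) (t : Finset κ) (u : ι → M)
    (v : κ → N) : f (∑ i ∈ s, u i) (∑ j ∈ t, v j) = ∑ i ∈ s, ∑ j ∈ t, f (u i) (v j) := by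
  have hsum_left : ∀ y, f (∑ i ∈ s, u i) y = ∑ i ∈ s, f (u i) y := fun y =>
    map_sum (AddMonoidHom.mk' (f · y) (hl · · y)) u s
  rw [hsum_left]
  exact sum_congr rfl fun i _ => map_sum (AddMonoidHom.mk' (f (u i)) (hr _)) v t

open MonoidAlgebra

theorem starA_single (w : F) (c : ℂ) : starA (single w c) = single w⁻¹ (starRingEnd ℂ c) := by
  rw [starA, coeff_single, Finsupp.mapRange_single, Finsupp.mapDomain_single, ofCoeff_single]

theorem starA_add (x y : A) : starA (x + y) = starA x + starA y := by
  rw [starA, starA, starA, coeff_add, Finsupp.mapRange_add (map_add _), Finsupp.mapDomain_add,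
    ofCoeff_add]

theorem starA_zero : starA 0 = 0 := by
  simp [starA]

theorem Agen_single (w : F) (c : ℂ) : Agen (single w c) = single w (len w * c) := by
  rw [Agen, coeff_single, Finsupp.sum_single_index (by simp), lam, smul_single', mul_one]

theorem Agen_add (x y : A) : Agen (x + y) = Agen x + Agen y := by
  rw [Agen, Agen, Agen, coeff_add]
  exact Finsupp.sum_add_index (by simp) fun _ _ _ _ => by rw [mul_add, add_smul]

theorem Lh_single (h w : F) (c : ℂ) :
    Lh h (single w c) = if isPrefix h w then single w c else 0 := by
  rw [Lh, coeff_single]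
  split_ifs with hp
  · rw [Finsupp.filter_single_of_pos _ hp, ofCoeff_single]
  · rw [Finsupp.filter_single_of_neg _ hp, ofCoeff_zero]

theorem Lh_add (h : F) (x y : A) : Lh h (x + y) = Lh h x + Lh h y := by
  rw [Lh, Lh, Lh, coeff_add, Finsupp.filter_add, ofCoeff_add]

theorem exists_isPrefix_of_Lh_ne_zero {h : F} {x : A} (hx : Lh h x ≠ 0) :
    ∃ w ∈ x.coeff.support, isPrefix h w := by
  contrapose! hx
  rw [Lh, ← coeff_inj, coeff_ofCoeff, coeff_zero, Finsupp.filter_eq_zero_iff]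
  exact fun w hw => Finsupp.notMem_support_iff.1 (mt (hx w) (not_not.2 hw))

def carreDuChamp (x y : A) : A := Agen (starA x) * y + starA x * Agen y - Agen (starA x * y)

def prefixForm (T : Finset F) (x y : A) : A := ∑ h ∈ T, starA (Lh h x) * Lh h y

theorem carreDuChamp_sum_sum {ι κ : Type*} (s : Finset ι) (t : Finset κ) (u : ι → A)
    (v : κ → A) :
    carreDuChamp (∑ i ∈ s, u i) (∑ j ∈ t, v j) = ∑ i ∈ s, ∑ j ∈ t, carreDuChamp (u i) (v j) := by
  refine sum_sum_of_biadditive _ (fun x x' y => ?_) (fun x y y' => ?_) s t u v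
  · simp only [carreDuChamp, starA_add, Agen_add, add_mul]
    abel
  · simp only [carreDuChamp, Agen_add, mul_add]
    abel

theorem prefixForm_sum_sum (T : Finset F) {ι κ : Type*} (s : Finset ι) (t : Finset κ)
    (u : ι → A) (v : κ → A) :
    prefixForm T (∑ i ∈ s, u i) (∑ j ∈ t, v j) = ∑ i ∈ s, ∑ j ∈ t, prefixForm T (u i) (v j) := by
  refine sum_sum_of_biadditive _ (fun x x' y => ?_) (fun x y y' => ?_) s t u v
  · simp only [prefixForm, Lh_add, starA_add, add_mul, sum_add_distrib]
  · simp only [prefixForm, Lh_add, mul_add, sum_add_distrib]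

theorem carreDuChamp_single_single (g w : F) (a b : ℂ) :
    carreDuChamp (single g a) (single w b)
      = single (g⁻¹ * w) ((len g + len w - len (g⁻¹ * w) : ℂ) * (starRingEnd ℂ a * b)) := by
  rw [carreDuChamp, starA_single, Agen_single, Agen_single, single_mul_single, single_mul_single,
    single_mul_single, Agen_single, len_inv, ← single_add, ← single_sub]
  ring_nf

theorem prefixForm_single_single {T : Finset F} {g w : F} (hT : commonPrefixes g w ⊆ T)
    (hT1 : 1 ∉ T) (a b : ℂ) :
    prefixForm T (single g a) (single w b)
      = single (g⁻¹ * w) (#(commonPrefixes g w) * (starRingEnd ℂ a * b)) := by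
  have hfilter : T.filter (fun h => isPrefix h w ∧ isPrefix h g) = commonPrefixes g w := by
    ext h
    rw [mem_filter, mem_commonPrefixes, and_comm (a := isPrefix h w)]
    exact ⟨fun ⟨hh, hp⟩ => ⟨ne_of_mem_of_not_mem hh hT1, hp⟩,
      fun hc => ⟨hT (mem_commonPrefixes.2 hc), hc.2⟩⟩
  simp only [prefixForm, Lh_single, apply_ite starA, starA_single, ite_mul, mul_ite,
    single_mul_single, starA_zero, zero_mul, mul_zero, ← ite_and, ← sum_filter, hfilter, sum_const,
    ← Nat.cast_smul_eq_nsmul ℂ, smul_single']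

theorem finsum_ne_one_eq_prefixForm (x : A) :
    ∑ᶠ (h : F) (_ : h ≠ 1), starA (Lh h x) * Lh h x
      = prefixForm ((x.coeff.support.biUnion prefixes).erase 1) x x := by
  refine finsum_cond_eq_sum_of_cond_iff _ fun {h} hne => ?_
  obtain ⟨w, hw, hp⟩ := exists_isPrefix_of_Lh_ne_zero (right_ne_zero_of_mul hne)
  have hmem : h ∈ x.coeff.support.biUnion prefixes :=
    mem_biUnion.2 ⟨w, hw, mem_prefixes.2 (isPrefix_iff_toWord_prefix.1 hp)⟩
  rw [mem_erase]
  exact ⟨fun h1 => ⟨h1, hmem⟩, And.left⟩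

/-- the carré du champ of the word-length generator is twice the sum of the
squares of the prefix projections. -/
theorem carre_du_champ (x : A) :
    Agen (starA x) * x + starA x * Agen x - Agen (starA x * x)
      = (2 : ℂ) • ∑ᶠ (h : F) (_ : h ≠ (1 : F)), starA (Lh h x) * Lh h x := by
  rw [finsum_ne_one_eq_prefixForm]
  set s := x.coeff.support
  have hx : x = ∑ w ∈ s, single w (x.coeff w) := x.sum_coeff_single.symm
  change carreDuChamp x x = _
  rw [hx, carreDuChamp_sum_sum, prefixForm_sum_sum, smul_sum]
  refine sum_congr rfl fun g hg => ?_
  rw [smul_sum]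
  refine sum_congr rfl fun w _ => ?_
  rw [carreDuChamp_single_single, prefixForm_single_single (commonPrefixes_subset hg w)
    (notMem_erase 1 _), smul_single']
  have hlen : (len g + len w : ℂ) = len (g⁻¹ * w) + 2 * #(commonPrefixes g w) := by
    exact_mod_cast len_add_len_eq_card_commonPrefixes g w
  congr 1
  linear_combination (starRingEnd ℂ (x.coeff g) * x.coeff w) * hlen
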